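/- arXiv:1111.1559 — 5 statements merged into one kernel-verified Lean document; each statement's English description precedes it below -/
import Mathlib

section
/- Let β₁, β₂ ∈ ℝ and let z : ℝ → ℂ be differentiable with z′(t) = (β₁ + i) z(t) + β₂ z(t)|z(t)|² + z(t)|z(t)|⁴ for all t. Suppose there is c > 0 with |z(t)| = c for all t ∈ ℝ. Then β₁ + β₂c² + c⁴ = 0 and z(t) = e^{it} z(0) for all t; in particular z is periodic with period 2π. -/
/-!
On the circle `|z| = c` the Bautin equation is linear, `z' = μ z` with
`μ = (β₁ + β₂c² + c⁴) + i`, so `z(t) = e^{μt} z(0)`. Then `|z(t)| = e^{t Re μ} c`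
stays equal to `c` only if `Re μ = 0`, i.e. `μ = i`.
-/

open Complex

theorem Complex.eq_exp_mul_of_hasDerivAt_mul {μ : ℂ} {z : ℝ → ℂ}
    (hz : ∀ t : ℝ, HasDerivAt z (μ * z t) t) (t : ℝ) :
    z t = exp (μ * t) * z 0 := by
  have hdamped : ∀ s : ℝ, HasDerivAt (fun s : ℝ ↦ exp (-μ * s) * z s) 0 s := by
    intro s
    have hexp : HasDerivAt (fun s : ℝ ↦ exp (-μ * s)) (exp (-μ * s) * -μ) s :=
      (((hasDerivAt_id (s : ℂ)).const_mul (-μ)).cexp).comp_ofReal.congr_deriv (by simp)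
    exact (hexp.mul (hz s)).congr_deriv (by ring)
  have hconst := is_const_of_deriv_eq_zero (fun s ↦ (hdamped s).differentiableAt)
    (fun s ↦ (hdamped s).deriv) t 0
  rw [ofReal_zero, mul_zero, exp_zero, one_mul] at hconst
  rw [← hconst, ← mul_assoc, ← exp_add]
  simp

theorem Complex.re_eq_zero_of_norm_exp_mul_eq {μ w : ℂ} (hw : w ≠ 0)
    (h : ‖exp μ * w‖ = ‖w‖) : μ.re = 0 := by
  rw [norm_mul, norm_exp] at h
  exact Real.exp_eq_one_iff _ |>.mp <| (mul_eq_right₀ (norm_ne_zero_iff.mpr hw)).mp h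

/-- Solutions of the Bautin normal form `z′ = (β₁ + i)z + β₂ z|z|² + z|z|⁴`
with constant modulus `c > 0` are uniform rotations: `β₁ + β₂c² + c⁴ = 0`,
`z(t) = e^{it} z(0)`, and `z` is `2π`-periodic. -/
theorem stmt_7 (β₁ β₂ : ℝ) (z : ℝ → ℂ)
    (hz : ∀ t : ℝ, HasDerivAt z
      (((β₁ : ℂ) + Complex.I) * z t
        + (β₂ : ℂ) * z t * ((‖z t‖ : ℂ)) ^ 2
        + z t * ((‖z t‖ : ℂ)) ^ 4) t)
    (c : ℝ) (hc : 0 < c) (hmod : ∀ t : ℝ, ‖z t‖ = c) :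
    β₁ + β₂ * c ^ 2 + c ^ 4 = 0
    ∧ (∀ t : ℝ, z t = Complex.exp (Complex.I * t) * z 0)
    ∧ ∀ t : ℝ, z (t + 2 * Real.pi) = z t := by
  set μ : ℂ := ((β₁ + β₂ * c ^ 2 + c ^ 4 : ℝ) : ℂ) + I with hμ
  have hlin : ∀ t, HasDerivAt z (μ * z t) t := fun t ↦ by
    convert hz t using 1
    rw [hmod t, hμ]
    push_cast
    ring
  have hsol := eq_exp_mul_of_hasDerivAt_mul hlin
  have hz0 : z 0 ≠ 0 := norm_ne_zero_iff.mp (hmod 0 ▸ hc.ne')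
  have hroot : β₁ + β₂ * c ^ 2 + c ^ 4 = 0 := by
    have hz1 := hsol 1
    rw [ofReal_one, mul_one] at hz1
    have hre := re_eq_zero_of_norm_exp_mul_eq hz0 (by rw [← hz1, hmod, hmod])
    rwa [hμ, add_re, ofReal_re, I_re, add_zero] at hre
  have hrot : ∀ t : ℝ, z t = exp (I * t) * z 0 := fun t ↦ by
    simpa [μ, hroot] using hsol t
  refine ⟨hroot, hrot, fun t ↦ ?_⟩
  rw [hrot, hrot t, mul_comm I, mul_comm I]
  exact congrArg (· * z 0) (by exact_mod_cast exp_mul_I_periodic t)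
end

section
/- Let β₁ > 0 and β₂ ∈ ℝ with β₂² < 4β₁ (in particular this holds whenever −2√β₁ < β₂). Then there is no ρ > 0 with ρ⁴ + β₂ρ² + β₁ = 0; consequently, every differentiable periodic function z : ℝ → ℂ with z(t) ≠ 0 for all t satisfying z′(t) = (β₁ + i) z(t) + β₂ z(t)|z(t)|² + z(t)|z(t)|⁴ for all t must fail to exist, i.e., the only periodic solutions of this ODE are those vanishing at some point. -/
/-!
Along a solution that never vanishes, `u = |z|²` satisfies `u' = 2u(β₁ + β₂u + u²)`. The factor
`β₁ + β₂u + u²` is a quadratic in `u` with negative discriminant, hence positive, so `u` is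
strictly increasing and cannot be periodic.
-/

theorem quadratic_pos_of_sq_lt {b c : ℝ} (h : b ^ 2 < 4 * c) (x : ℝ) : 0 < x ^ 2 + b * x + c := by
  nlinarith [sq_nonneg (2 * x + b)]

theorem hasDerivAt_norm_sq_of_hasDerivAt_mul {z : ℝ → ℂ} {c : ℂ} {t : ℝ}
    (hz : HasDerivAt z (c * z t) t) :
    HasDerivAt (fun s => ‖z s‖ ^ 2) (2 * (c.re * ‖z t‖ ^ 2)) t := by
  convert hz.norm_sq using 2
  rw [Complex.inner, mul_assoc, Complex.mul_conj, Complex.re_mul_ofReal, Complex.normSq_eq_norm_sq]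

theorem bautin_field_eq_mul (β₁ β₂ : ℝ) (w : ℂ) :
    ((β₁ : ℂ) + Complex.I) * w + (β₂ : ℂ) * w * ((‖w‖ : ℝ) : ℂ) ^ 2 + w * ((‖w‖ : ℝ) : ℂ) ^ 4
      = ((β₁ + β₂ * ‖w‖ ^ 2 + ‖w‖ ^ 4 : ℝ) + Complex.I) * w := by
  push_cast
  ring

theorem stmt_9_general (β₁ β₂ : ℝ) (hdisc : β₂ ^ 2 < 4 * β₁) :
    (∀ ρ : ℝ, 0 < ρ → ρ ^ 4 + β₂ * ρ ^ 2 + β₁ ≠ 0)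
    ∧ ∀ (z : ℝ → ℂ) (T : ℝ), 0 < T →
        (∀ t : ℝ, HasDerivAt z
          (((β₁ : ℂ) + Complex.I) * z t
            + (β₂ : ℂ) * z t * (((‖z t‖ : ℝ) : ℂ)) ^ 2
            + z t * (((‖z t‖ : ℝ) : ℂ)) ^ 4) t) →
        (∀ t : ℝ, z (t + T) = z t) →
        ∃ t : ℝ, z t = 0 := by
  refine ⟨fun ρ _ => ?_, fun z T hT hz hper => ?_⟩
  · rw [show ρ ^ 4 = (ρ ^ 2) ^ 2 by ring]
    exact (quadratic_pos_of_sq_lt hdisc (ρ ^ 2)).ne'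
  by_contra! hne
  have hu (t : ℝ) := hasDerivAt_norm_sq_of_hasDerivAt_mul (bautin_field_eq_mul β₁ β₂ (z t) ▸ hz t)
  have hmono : StrictMono fun t => ‖z t‖ ^ 2 := by
    refine strictMono_of_hasDerivAt_pos hu fun t => ?_
    have hpos := quadratic_pos_of_sq_lt hdisc (‖z t‖ ^ 2)
    have hzt : 0 < ‖z t‖ ^ 2 := pow_pos (norm_pos_iff.mpr (hne t)) 2
    simp only [Complex.add_re, Complex.ofReal_re, Complex.I_re, add_zero]
    nlinarith
  exact (hmono (lt_add_of_pos_right 0 hT)).ne' (by simp only [hper])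

/-- For `β₁ > 0` and `β₂² < 4β₁`, the quartic `ρ⁴ + β₂ρ² + β₁ = 0` has no
positive root, and consequently every periodic solution of the Bautin normal
form `z′ = (β₁ + i)z + β₂ z|z|² + z|z|⁴` must vanish somewhere. -/
theorem stmt_9 (β₁ β₂ : ℝ) (hβ₁ : 0 < β₁) (hdisc : β₂ ^ 2 < 4 * β₁) :
    (∀ ρ : ℝ, 0 < ρ → ρ ^ 4 + β₂ * ρ ^ 2 + β₁ ≠ 0)
    ∧ ∀ (z : ℝ → ℂ) (T : ℝ), 0 < T →
        (∀ t : ℝ, HasDerivAt z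
          (((β₁ : ℂ) + Complex.I) * z t
            + (β₂ : ℂ) * z t * (((‖z t‖ : ℝ) : ℂ)) ^ 2
            + z t * (((‖z t‖ : ℝ) : ℂ)) ^ 4) t) →
        (∀ t : ℝ, z (t + T) = z t) →
        ∃ t : ℝ, z t = 0 :=
  stmt_9_general β₁ β₂ hdisc
end

section
/- Let β₁ ≥ 0 and β₂ ≥ 0, and let z : ℝ → ℂ be differentiable with z′(t) = (β₁ + i) z(t) + β₂ z(t)|z(t)|² + z(t)|z(t)|⁴ for all t. If a < b and z(t) ≠ 0 for all t ∈ [a, b], then |z(b)| > |z(a)|; that is, the modulus of every nonvanishing solution is strictly increasing. -/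
/-!
The vector field is `(ρ(w) + i) w` with `ρ(w) = β₁ + β₂|w|² + |w|⁴` real, so
`d/dt |z|² = 2 ⟪z, z'⟫ = 2 ρ(z) |z|²`, which is positive wherever `z ≠ 0`.
-/

open Complex

theorem strictMonoOn_norm_of_inner_deriv_pos {E : Type*} [NormedAddCommGroup E]
    [InnerProductSpace ℝ E] {z z' : ℝ → E} {s : Set ℝ} (hs : Convex ℝ s)
    (hz : ∀ t ∈ s, HasDerivAt z (z' t) t)
    (hpos : ∀ t ∈ interior s, 0 < inner ℝ (z t) (z' t)) :
    StrictMonoOn (fun t => ‖z t‖) s := by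
  have hsq : StrictMonoOn (fun t => ‖z t‖ ^ 2) s := by
    refine strictMonoOn_of_deriv_pos hs
      (fun t ht => (hz t ht).norm_sq.continuousAt.continuousWithinAt) fun t ht => ?_
    rw [(hz t (interior_subset ht)).norm_sq.deriv]
    linarith [hpos t ht]
  intro t ht u hu htu
  exact (pow_lt_pow_iff_left₀ (norm_nonneg _) (norm_nonneg _) two_ne_zero).1 (hsq ht hu htu)

theorem Complex.real_inner_mul_self_right (c w : ℂ) :
    inner ℝ w (c * w) = c.re * ‖w‖ ^ 2 := by
  rw [Complex.inner, mul_assoc, mul_conj, re_mul_ofReal, normSq_eq_norm_sq]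

theorem real_inner_bautin_field (β₁ β₂ : ℝ) (w : ℂ) :
    inner ℝ w (((β₁ : ℂ) + I) * w + (β₂ : ℂ) * w * ((‖w‖ : ℂ)) ^ 2 + w * ((‖w‖ : ℂ)) ^ 4)
      = (β₁ + β₂ * ‖w‖ ^ 2 + ‖w‖ ^ 4) * ‖w‖ ^ 2 := by
  have hfield : ((β₁ : ℂ) + I) * w + (β₂ : ℂ) * w * ((‖w‖ : ℂ)) ^ 2 + w * ((‖w‖ : ℂ)) ^ 4
      = (((β₁ + β₂ * ‖w‖ ^ 2 + ‖w‖ ^ 4 : ℝ) : ℂ) + I) * w := by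
    push_cast; ring
  rw [hfield, Complex.real_inner_mul_self_right, add_re, ofReal_re, I_re, add_zero]

/-- For `β₁ ≥ 0`, `β₂ ≥ 0`, the modulus of every nonvanishing solution of the
Bautin normal form `z′ = (β₁ + i)z + β₂ z|z|² + z|z|⁴` is strictly
increasing. -/
theorem stmt_11 (β₁ β₂ : ℝ) (hβ₁ : 0 ≤ β₁) (hβ₂ : 0 ≤ β₂) (z : ℝ → ℂ)
    (hz : ∀ t : ℝ, HasDerivAt z
      (((β₁ : ℂ) + Complex.I) * z t
        + (β₂ : ℂ) * z t * ((‖z t‖ : ℂ)) ^ 2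
        + z t * ((‖z t‖ : ℂ)) ^ 4) t)
    (a b : ℝ) (hab : a < b) (hnz : ∀ t ∈ Set.Icc a b, z t ≠ 0) :
    ‖z a‖ < ‖z b‖ := by
  have hmono : StrictMonoOn (fun t => ‖z t‖) (Set.Icc a b) := by
    refine strictMonoOn_norm_of_inner_deriv_pos (convex_Icc a b) (fun t _ => hz t) fun t ht => ?_
    have hzt : 0 < ‖z t‖ := norm_pos_iff.2 (hnz t (interior_subset ht))
    rw [real_inner_bautin_field]
    positivity
  exact hmono (Set.left_mem_Icc.2 hab.le) (Set.right_mem_Icc.2 hab.le) hab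
end

section
/- Let β₁ > 0, β₂ < −2√β₁, and set ρ₁ = √((−β₂ − √(β₂² − 4β₁))/2), ρ₂ = √((−β₂ + √(β₂² − 4β₁))/2). Let z : ℝ → ℂ be differentiable with z′(t) = (β₁ + i) z(t) + β₂ z(t)|z(t)|² + z(t)|z(t)|⁴ for all t. If a < b and ρ₁ < |z(t)| < ρ₂ for all t ∈ [a, b], then |z(b)| < |z(a)|; that is, the modulus is strictly decreasing in the annulus between the two limit cycles. -/
/-!
The vector field is `z ↦ (P(|z|) + i) z` with `P(r) = β₁ + β₂ r² + r⁴`, so along a solution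
`d/dt |z|² = 2 ⟪z, z'⟫ = 2 P(|z|) |z|²`. Now `P(r) = (r² − s₁)(r² − s₂)`, where `s₁ ≤ s₂` are the
radicands defining `ρ₁, ρ₂`, and `ρ₁ < r < ρ₂` forces `s₁ < r² < s₂`; so the derivative is negative
in the annulus and `|z|` strictly decreases there.
-/

open Complex Set

lemma norm_lt_norm_of_inner_deriv_neg {E : Type*} [NormedAddCommGroup E] [InnerProductSpace ℝ E]
    {f f' : ℝ → E} {a b : ℝ} (hab : a < b) (hcont : ContinuousOn f (Icc a b))
    (hf : ∀ t ∈ Ioo a b, HasDerivAt f (f' t) t)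
    (hinward : ∀ t ∈ Ioo a b, inner ℝ (f t) (f' t) < 0) : ‖f b‖ < ‖f a‖ := by
  have hanti : StrictAntiOn (fun t => ‖f t‖ ^ 2) (Icc a b) := by
    refine strictAntiOn_of_hasDerivWithinAt_neg (convex_Icc a b)
      (f' := fun t => 2 * inner ℝ (f t) (f' t)) ?_ ?_ ?_
    · exact (continuous_norm.comp_continuousOn hcont).pow 2
    · intro t ht
      rw [interior_Icc] at ht ⊢
      exact (hf t ht).norm_sq.hasDerivWithinAt
    · intro t ht
      rw [interior_Icc] at ht
      linarith [hinward t ht]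
  exact lt_of_pow_lt_pow_left₀ 2 (norm_nonneg _)
    (hanti (left_mem_Icc.2 hab.le) (right_mem_Icc.2 hab.le) hab)

lemma inner_self_ofReal_add_I_mul (z : ℂ) (g : ℝ) :
    inner ℝ z (((g : ℂ) + I) * z) = g * ‖z‖ ^ 2 := by
  rw [Complex.inner, mul_assoc, mul_conj, normSq_eq_norm_sq, re_mul_ofReal]
  simp

lemma bautin_field_eq (β₁ β₂ : ℝ) (z : ℂ) :
    ((β₁ : ℂ) + I) * z + (β₂ : ℂ) * z * ((‖z‖ : ℂ)) ^ 2 + z * ((‖z‖ : ℂ)) ^ 4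
      = (((β₁ + β₂ * ‖z‖ ^ 2 + ‖z‖ ^ 4 : ℝ) : ℂ) + I) * z := by
  push_cast
  ring

lemma quartic_neg_of_sqrt_root_lt_of_lt_sqrt_root {β₁ β₂ x : ℝ}
    (h₁ : √((-β₂ - √(β₂ ^ 2 - 4 * β₁)) / 2) < x)
    (h₂ : x < √((-β₂ + √(β₂ ^ 2 - 4 * β₁)) / 2)) :
    β₁ + β₂ * x ^ 2 + x ^ 4 < 0 := by
  set D := β₂ ^ 2 - 4 * β₁
  have hsD : 0 < √D := by
    refine (Real.sqrt_nonneg D).lt_of_ne fun h => ?_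
    rw [← h, sub_zero] at h₁
    rw [← h, add_zero] at h₂
    exact h₂.not_gt h₁
  have hsq : √D ^ 2 = β₂ ^ 2 - 4 * β₁ := Real.sq_sqrt (Real.sqrt_pos.1 hsD).le
  have hx : 0 ≤ x := (Real.sqrt_nonneg _).trans h₁.le
  have hlo : (-β₂ - √D) / 2 < x ^ 2 := calc
    (-β₂ - √D) / 2 ≤ max ((-β₂ - √D) / 2) 0 := le_max_left _ _
    _ = √((-β₂ - √D) / 2) ^ 2 := Real.sq_sqrt'.symm
    _ < x ^ 2 := pow_lt_pow_left₀ h₁ (Real.sqrt_nonneg _) two_ne_zero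
  have hhi : x ^ 2 < (-β₂ + √D) / 2 := by
    have hr₂ : 0 < (-β₂ + √D) / 2 := Real.sqrt_pos.1 (hx.trans_lt h₂)
    calc x ^ 2 < √((-β₂ + √D) / 2) ^ 2 := pow_lt_pow_left₀ h₂ hx two_ne_zero
      _ = (-β₂ + √D) / 2 := Real.sq_sqrt hr₂.le
  -- the two radicands are the roots of `s² + β₂ s + β₁`
  have hfactor : β₁ + β₂ * x ^ 2 + x ^ 4
      = (x ^ 2 - (-β₂ - √D) / 2) * (x ^ 2 - (-β₂ + √D) / 2) := by
    linear_combination (1 / 4 : ℝ) * hsq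
  rw [hfactor]
  exact mul_neg_of_pos_of_neg (sub_pos.2 hlo) (sub_neg.2 hhi)

theorem stmt_12_general (β₁ β₂ : ℝ)
    (ρ₁ ρ₂ : ℝ)
    (hρ₁ : ρ₁ = Real.sqrt ((-β₂ - Real.sqrt (β₂ ^ 2 - 4 * β₁)) / 2))
    (hρ₂ : ρ₂ = Real.sqrt ((-β₂ + Real.sqrt (β₂ ^ 2 - 4 * β₁)) / 2))
    (z : ℝ → ℂ)
    (hz : ∀ t : ℝ, HasDerivAt z
      (((β₁ : ℂ) + Complex.I) * z t
        + (β₂ : ℂ) * z t * ((‖z t‖ : ℂ)) ^ 2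
        + z t * ((‖z t‖ : ℂ)) ^ 4) t)
    (a b : ℝ) (hab : a < b)
    (hball : ∀ t ∈ Set.Icc a b, ρ₁ < ‖z t‖ ∧ ‖z t‖ < ρ₂) :
    ‖z b‖ < ‖z a‖ := by
  refine norm_lt_norm_of_inner_deriv_neg hab (fun t _ => (hz t).continuousAt.continuousWithinAt)
    (fun t _ => hz t) fun t ht => ?_
  obtain ⟨hlo, hhi⟩ := hball t (Ioo_subset_Icc_self ht)
  subst hρ₁ hρ₂
  have hpos : 0 < ‖z t‖ := (Real.sqrt_nonneg _).trans_lt hlo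
  rw [bautin_field_eq, inner_self_ofReal_add_I_mul]
  exact mul_neg_of_neg_of_pos (quartic_neg_of_sqrt_root_lt_of_lt_sqrt_root hlo hhi) (by positivity)

/-- For `β₁ > 0`, `β₂ < −2√β₁`, the modulus of a solution of the Bautin
normal form `z′ = (β₁ + i)z + β₂ z|z|² + z|z|⁴` is strictly decreasing in
the annulus `ρ₁ < |z| < ρ₂` between the two limit cycles. -/
theorem stmt_12 (β₁ β₂ : ℝ) (hβ₁ : 0 < β₁) (hβ₂ : β₂ < -2 * Real.sqrt β₁)
    (ρ₁ ρ₂ : ℝ)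
    (hρ₁ : ρ₁ = Real.sqrt ((-β₂ - Real.sqrt (β₂ ^ 2 - 4 * β₁)) / 2))
    (hρ₂ : ρ₂ = Real.sqrt ((-β₂ + Real.sqrt (β₂ ^ 2 - 4 * β₁)) / 2))
    (z : ℝ → ℂ)
    (hz : ∀ t : ℝ, HasDerivAt z
      (((β₁ : ℂ) + Complex.I) * z t
        + (β₂ : ℂ) * z t * ((‖z t‖ : ℂ)) ^ 2
        + z t * ((‖z t‖ : ℂ)) ^ 4) t)
    (a b : ℝ) (hab : a < b)
    (hball : ∀ t ∈ Set.Icc a b, ρ₁ < ‖z t‖ ∧ ‖z t‖ < ρ₂) :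
    ‖z b‖ < ‖z a‖ :=
  stmt_12_general β₁ β₂ ρ₁ ρ₂ hρ₁ hρ₂ z hz a b hab hball
end

section
/- Let β₁ > 0 and β₂ = −2√β₁, and let z : ℝ → ℂ be differentiable with z′(t) = (β₁ + i) z(t) + β₂ z(t)|z(t)|² + z(t)|z(t)|⁴ for all t. If a < b and for all t ∈ [a, b] one has z(t) ≠ 0 and |z(t)| ≠ β₁^{1/4}, then |z(b)| > |z(a)|. -/
/-!
For `z' = c z` the squared modulus `r = ‖z‖²` satisfies `r' = 2 (Re c) r`. Here
`Re c = β₁ + β₂ r + r²`, which on `β₂ = -2√β₁` equals `(r - √β₁)²`; it vanishes only on the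
circle `r = √β₁`, so `r' > 0` while `z` avoids the origin and that circle.
-/

open Complex

lemma HasDerivAt.norm_sq_of_hasDerivAt_mul {z : ℝ → ℂ} {c : ℂ} {t : ℝ}
    (hz : HasDerivAt z (c * z t) t) :
    HasDerivAt (‖z ·‖ ^ 2) (2 * c.re * ‖z t‖ ^ 2) t := by
  convert hz.norm_sq using 1
  rw [Complex.inner, mul_assoc c, mul_conj, re_mul_ofReal, normSq_eq_norm_sq]
  ring

lemma add_neg_two_sqrt_mul_add_sq {β₁ : ℝ} (hβ₁ : 0 ≤ β₁) (x : ℝ) :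
    β₁ + -2 * √β₁ * x + x ^ 2 = (x - √β₁) ^ 2 := by
  linear_combination (Real.sq_sqrt hβ₁).symm

lemma rpow_one_fourth_sq {x : ℝ} (hx : 0 ≤ x) : (x ^ (1 / 4 : ℝ)) ^ 2 = √x := by
  rw [← Real.rpow_natCast, ← Real.rpow_mul hx, Real.sqrt_eq_rpow]
  norm_num

lemma sq_ne_sqrt_of_ne_rpow_one_fourth {x ρ : ℝ} (hx : 0 ≤ x) (hρ : 0 ≤ ρ)
    (hne : ρ ≠ x ^ (1 / 4 : ℝ)) : ρ ^ 2 ≠ √x := by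
  rw [← rpow_one_fourth_sq hx]
  exact fun h ↦ hne ((pow_left_inj₀ hρ (by positivity) two_ne_zero).mp h)

/-- On the curve `β₂ = −2√β₁` (with `β₁ > 0`), the modulus of every solution
of the Bautin normal form `z′ = (β₁ + i)z + β₂ z|z|² + z|z|⁴` that avoids both
the origin and the semistable circle of radius `β₁^{1/4}` is strictly
increasing. -/
theorem stmt_16 (β₁ β₂ : ℝ) (hβ₁ : 0 < β₁) (hβ₂ : β₂ = -2 * Real.sqrt β₁)
    (z : ℝ → ℂ)
    (hz : ∀ t : ℝ, HasDerivAt z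
      (((β₁ : ℂ) + Complex.I) * z t
        + (β₂ : ℂ) * z t * ((‖z t‖ : ℂ)) ^ 2
        + z t * ((‖z t‖ : ℂ)) ^ 4) t)
    (a b : ℝ) (hab : a < b)
    (havoid : ∀ t ∈ Set.Icc a b,
        z t ≠ 0 ∧ ‖z t‖ ≠ β₁ ^ ((1 : ℝ) / 4)) :
    ‖z a‖ < ‖z b‖ := by
  have hderiv : ∀ t, HasDerivAt (‖z ·‖ ^ 2) (2 * (‖z t‖ ^ 2 - √β₁) ^ 2 * ‖z t‖ ^ 2) t := by
    intro t
    have hzc : HasDerivAt z (((β₁ + β₂ * ‖z t‖ ^ 2 + ‖z t‖ ^ 4 : ℝ) + I) * z t) t := by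
      convert hz t using 1
      push_cast
      ring
    convert hzc.norm_sq_of_hasDerivAt_mul using 2
    simp only [add_re, ofReal_re, I_re, add_zero]
    rw [hβ₂, ← add_neg_two_sqrt_mul_add_sq hβ₁.le]
    ring
  have hpos : ∀ t ∈ Set.Icc a b, 0 < 2 * (‖z t‖ ^ 2 - √β₁) ^ 2 * ‖z t‖ ^ 2 := by
    intro t ht
    obtain ⟨hz0, hcircle⟩ := havoid t ht
    have := sub_ne_zero.mpr (sq_ne_sqrt_of_ne_rpow_one_fourth hβ₁.le (norm_nonneg _) hcircle)
    have := norm_ne_zero_iff.mpr hz0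
    positivity
  have hmono : StrictMonoOn (‖z ·‖ ^ 2) (Set.Icc a b) :=
    strictMonoOn_of_hasDerivWithinAt_pos (convex_Icc a b)
      (fun t _ ↦ (hderiv t).continuousAt.continuousWithinAt)
      (fun t _ ↦ (hderiv t).hasDerivWithinAt)
      (fun t ht ↦ hpos t (interior_subset ht))
  exact lt_of_pow_lt_pow_left₀ 2 (norm_nonneg _)
    (hmono (Set.left_mem_Icc.mpr hab.le) (Set.right_mem_Icc.mpr hab.le) hab)
end
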